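/- arXiv:2505.09948 — 3 statements merged into one kernel-verified Lean document; each statement's English description precedes it below -/
import Mathlib

section
/- Let x ∈ D and let φ_x : 𝕋 → 𝕋 be the Möbius transformation φ_x(z) = (z + x)/(1 + conj(x)·z). Then the pushforward (φ_x)_*(m) of the normalized arc-length measure m under φ_x equals the measure P_x·m with density the Poisson kernel P_x. -/
open MeasureTheory Filter Set

noncomputable section

/-- The unit circle 𝕋 = {z ∈ ℂ : |z| = 1}. -/
def unitCircle : Set ℂ := {z : ℂ | ‖z‖ = 1}

/-- The open unit disc D = {z ∈ ℂ : |z| < 1}. -/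
def unitDisc : Set ℂ := {z : ℂ | ‖z‖ < 1}

/-- Normalized arc-length (Haar probability) measure on the unit circle, realised as a
measure on ℂ: the pushforward of Lebesgue measure on [0,1) under t ↦ e^{2πit}. -/
def mCircle : Measure ℂ :=
  Measure.map (fun t : ℝ => Complex.exp (2 * (Real.pi : ℂ) * Complex.I * (t : ℂ)))
    (volume.restrict (Set.Ico (0 : ℝ) 1))

/-- The Poisson kernel P_x(z) = (1 − |x|²)/|z − x|². -/
def poissonK (x z : ℂ) : ℝ := (1 - ‖x‖ ^ 2) / ‖z - x‖ ^ 2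

/-- `T` is a finite Blaschke product of degree `n ≥ 1`. -/
def IsBlaschke (n : ℕ) (T : ℂ → ℂ) : Prop :=
  1 ≤ n ∧ ∃ (θ₀ : ℂ) (a : Fin n → ℂ), ‖θ₀‖ = 1 ∧ (∀ i, ‖a i‖ < 1) ∧
    ∀ z : ℂ, T z = θ₀ * ∏ i, (z - a i) / (1 - (starRingEnd ℂ) (a i) * z)

/-- inf_{z ∈ 𝕋} |T'(z)|. -/
def derivInf (T : ℂ → ℂ) : ℝ := ⨅ z : unitCircle, ‖deriv T (z : ℂ)‖

/-- The backward cocycle iterate T_{σ^{-n}ω}^{(n)} = T_{σ^{-1}ω} ∘ ⋯ ∘ T_{σ^{-n}ω}. -/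
def backIter {Ω : Type*} (σinv : Ω → Ω) (T : Ω → ℂ → ℂ) : ℕ → Ω → ℂ → ℂ
  | 0, _, z => z
  | n + 1, ω, z => backIter σinv T n ω (T (σinv^[n + 1] ω) z)


/-! The Möbius map `φ_x` lifts through `t ↦ e^{2πit}` to the map
`g(t) = t - arg(1 + x̄ e^{2πit}) / π` of `ℝ`; the argument is smooth along the path because
`1 + x̄ e^{2πit}` stays in the right half-plane. The lift satisfies `g(t + 1) = g(t) + 1` and
`g'(t) = (1 - |x|²) / |1 + x̄ e^{2πit}|² = 1 / P_x(φ_x(e^{2πit})) > 0`, so by the one-dimensional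
change of variables and periodicity, pushing Lebesgue measure on `[0, 1)` through `g` and then
through `t ↦ e^{2πit}` is the same as pushing it through `t ↦ e^{2πit}` and weighting by `P_x`. -/

open Complex ComplexConjugate
open scoped ENNReal Real

theorem Function.Periodic.setLIntegral_Ico_eq {F : ℝ → ℝ≥0∞} {T : ℝ} (hF : Function.Periodic F T)
    (hT : 0 < T) (a b : ℝ) :
    ∫⁻ t in Ico a (a + T), F t = ∫⁻ t in Ico b (b + T), F t := by
  simp only [Measure.restrict_congr_set Ico_ae_eq_Ioc]
  exact (isAddFundamentalDomain_Ioc hT a).setLIntegral_eq (isAddFundamentalDomain_Ioc hT b) F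
    hF.map_vadd_zmultiples

section PeriodicLift

variable {g g' : ℝ → ℝ} {T : ℝ}

theorem StrictMono.image_Ico_add_eq (hmono : StrictMono g) (hcont : Continuous g)
    (hgT : ∀ t, g (t + T) = g t + T) (hT : 0 ≤ T) (a : ℝ) :
    g '' Ico a (a + T) = Ico (g a) (g a + T) := by
  refine Subset.antisymm ?_ ?_
  · rintro _ ⟨t, ⟨hat, htT⟩, rfl⟩
    exact ⟨hmono.monotone hat, hgT a ▸ hmono htT⟩
  · rw [← hgT]
    exact intermediate_value_Ico (by linarith) hcont.continuousOn

theorem setLIntegral_Ico_deriv_mul_comp_of_periodic (hT : 0 < T)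
    (hg : ∀ t, HasDerivAt g (g' t) t) (hg' : ∀ t, 0 < g' t) (hgT : ∀ t, g (t + T) = g t + T)
    {F : ℝ → ℝ≥0∞} (hF : Function.Periodic F T) (a : ℝ) :
    ∫⁻ t in Ico a (a + T), ENNReal.ofReal (g' t) * F (g t) = ∫⁻ t in Ico a (a + T), F t := by
  have hmono : StrictMono g := strictMono_of_hasDerivAt_pos hg hg'
  have hcont : Continuous g := continuous_iff_continuousAt.2 fun t => (hg t).continuousAt
  calc ∫⁻ t in Ico a (a + T), ENNReal.ofReal (g' t) * F (g t)
      = ∫⁻ y in g '' Ico a (a + T), F y := by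
        rw [lintegral_image_eq_lintegral_abs_deriv_mul measurableSet_Ico
          (fun t _ => (hg t).hasDerivWithinAt) hmono.injective.injOn]
        simp only [abs_of_pos (hg' _)]
    _ = ∫⁻ y in Ico (g a) (g a + T), F y := by rw [hmono.image_Ico_add_eq hcont hgT hT.le]
    _ = ∫⁻ t in Ico a (a + T), F t := hF.setLIntegral_Ico_eq hT _ _

theorem map_comp_restrict_Ico_eq_withDensity (hT : 0 < T)
    (hg : ∀ t, HasDerivAt g (g' t) t) (hg' : ∀ t, 0 < g' t) (hgT : ∀ t, g (t + T) = g t + T)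
    {X : Type*} [MeasurableSpace X] {e : ℝ → X} (he : Measurable e)
    (heT : Function.Periodic e T) {D : X → ℝ≥0∞} (hD : Measurable D)
    (hDg : ∀ t, D (e (g t)) * ENNReal.ofReal (g' t) = 1) (a : ℝ) :
    Measure.map (e ∘ g) (volume.restrict (Ico a (a + T))) =
      (Measure.map e (volume.restrict (Ico a (a + T)))).withDensity D := by
  have hgm : Measurable g :=
    (continuous_iff_continuousAt.2 fun t => (hg t).continuousAt).measurable
  ext A hA
  have hpt : ∀ t, A.indicator 1 (e (g t)) = ENNReal.ofReal (g' t) * A.indicator D (e (g t)) := by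
    intro t
    by_cases h : e (g t) ∈ A <;> simp [h, mul_comm, hDg]
  rw [← lintegral_indicator_one hA, lintegral_map (measurable_one.indicator hA) (he.comp hgm),
    withDensity_apply _ hA, ← lintegral_indicator hA, lintegral_map (hD.indicator hA) he]
  simp only [Function.comp_apply, hpt]
  exact setLIntegral_Ico_deriv_mul_comp_of_periodic hT hg hg' hgT
    (F := fun s => A.indicator D (e s)) (fun t => congrArg (A.indicator D) (heT t)) a

end PeriodicLift

theorem one_add_mem_slitPlane {u : ℂ} (hu : ‖u‖ < 1) : 1 + u ∈ slitPlane := by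
  refine mem_slitPlane_iff.2 (Or.inl ?_)
  rw [add_re, one_re]
  linarith [neg_abs_le u.re, abs_re_le_norm u]

theorem HasDerivAt.carg_real {f : ℝ → ℂ} {f' : ℂ} {t : ℝ} (hf : HasDerivAt f f' t)
    (h : f t ∈ slitPlane) : HasDerivAt (fun s => arg (f s)) (f' / f t).im t := by
  simpa only [Function.comp_def, imCLM_apply, log_im] using
    imCLM.hasFDerivAt.comp_hasDerivAt t (hf.clog_real h)

theorem exp_neg_two_mul_arg_mul_I {w : ℂ} (hw : w ≠ 0) :
    exp (-(2 * arg w) * I) = conj w / w := by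
  have h : -(2 * (arg w : ℂ)) * I = conj (log w) - log w := by
    rw [← neg_sub, sub_conj, log_im]
    push_cast; ring
  rw [h, exp_sub, exp_conj, exp_log hw]

theorem one_sub_two_mul_re_div_one_add {u : ℂ} (hu : 1 + u ≠ 0) :
    1 - 2 * (u / (1 + u)).re = (1 - ‖u‖ ^ 2) / ‖1 + u‖ ^ 2 := by
  have hN : normSq (1 + u) ≠ 0 := mt normSq_eq_zero.1 hu
  have hexp : normSq (1 + u) = 1 + 2 * u.re + normSq u := by
    simp only [normSq_apply, add_re, add_im, one_re, one_im]; ring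
  rw [div_re, ← normSq_eq_norm_sq, ← normSq_eq_norm_sq, add_re, one_re, add_im, one_im]
  field_simp
  rw [hexp, normSq_apply]
  ring

def circleExp (t : ℝ) : ℂ := exp (2 * π * I * t)

theorem mCircle_eq_map_circleExp : mCircle = Measure.map circleExp (volume.restrict (Ico 0 1)) :=
  rfl

theorem norm_circleExp (t : ℝ) : ‖circleExp t‖ = 1 := by
  simp [circleExp, norm_exp]

theorem circleExp_mul_conj (t : ℝ) : circleExp t * conj (circleExp t) = 1 := by
  rw [mul_conj, normSq_eq_norm_sq, norm_circleExp]
  norm_num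

theorem circleExp_periodic : Function.Periodic circleExp 1 := by
  intro t
  simp only [circleExp, ofReal_add, ofReal_one, mul_add, exp_add, mul_one, exp_two_pi_mul_I]

theorem measurable_circleExp : Measurable circleExp := by
  unfold circleExp; fun_prop

theorem hasDerivAt_circleExp (t : ℝ) : HasDerivAt circleExp (2 * π * I * circleExp t) t := by
  have h := ((hasDerivAt_id (t : ℂ)).const_mul (2 * π * I)).cexp.comp_ofReal
  simp only [mul_one, id, mul_comm (exp _)] at h
  exact h

theorem norm_conj_mul_circleExp (x : ℂ) (t : ℝ) : ‖conj x * circleExp t‖ = ‖x‖ := by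
  rw [norm_mul, norm_conj, norm_circleExp, mul_one]

theorem one_add_conj_mul_circleExp_ne_zero {x : ℂ} (hx : ‖x‖ < 1) (t : ℝ) :
    1 + conj x * circleExp t ≠ 0 :=
  slitPlane_ne_zero (one_add_mem_slitPlane ((norm_conj_mul_circleExp x t).trans_lt hx))

def mobius (x z : ℂ) : ℂ := (z + x) / (1 + conj x * z)

def mobiusLift (x : ℂ) (t : ℝ) : ℝ := t - arg (1 + conj x * circleExp t) / π

theorem measurable_mobius (x : ℂ) : Measurable (mobius x) := by
  unfold mobius; fun_prop

theorem circleExp_mobiusLift {x : ℂ} (hx : ‖x‖ < 1) (t : ℝ) :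
    circleExp (mobiusLift x t) = mobius x (circleExp t) := by
  set w := 1 + conj x * circleExp t
  have hw : w ≠ 0 := one_add_conj_mul_circleExp_ne_zero hx t
  have hsplit : 2 * π * I * ((t - arg w / π : ℝ) : ℂ) = 2 * π * I * t + -(2 * arg w) * I := by
    have : (π : ℂ) ≠ 0 := ofReal_ne_zero.2 Real.pi_ne_zero
    push_cast; field_simp; ring
  have hnum : circleExp t * conj w = circleExp t + x := by
    simp only [w, map_add, map_one, map_mul, conj_conj]
    linear_combination x * circleExp_mul_conj t
  rw [mobiusLift, circleExp, hsplit, exp_add, exp_neg_two_mul_arg_mul_I hw, ← circleExp,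
    mul_div_assoc', hnum, mobius]

theorem mobiusLift_add_one (x : ℂ) (t : ℝ) : mobiusLift x (t + 1) = mobiusLift x t + 1 := by
  simp only [mobiusLift, circleExp_periodic t]
  ring

theorem hasDerivAt_mobiusLift {x : ℂ} (hx : ‖x‖ < 1) (t : ℝ) :
    HasDerivAt (mobiusLift x) ((1 - ‖x‖ ^ 2) / ‖1 + conj x * circleExp t‖ ^ 2) t := by
  set u := conj x * circleExp t
  have hnorm : ‖u‖ = ‖x‖ := norm_conj_mul_circleExp x t
  have hslit : 1 + u ∈ slitPlane := one_add_mem_slitPlane (hnorm.trans_lt hx)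
  have hw := ((hasDerivAt_circleExp t).const_mul (conj x)).const_add 1
  refine ((hasDerivAt_id t).sub ((hw.carg_real hslit).div_const π)).congr_deriv ?_
  have him : (conj x * (2 * π * I * circleExp t) / (1 + u)).im = 2 * π * (u / (1 + u)).re := by
    rw [show conj x * (2 * π * I * circleExp t) / (1 + u) = ((2 * π : ℝ) : ℂ) * (I * (u / (1 + u)))
      by push_cast; ring]
    simp [mul_im]
  rw [him, mul_div_right_comm, mul_div_cancel_right₀ _ Real.pi_ne_zero,
    one_sub_two_mul_re_div_one_add (slitPlane_ne_zero hslit), hnorm]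

theorem poissonK_mobius {x z : ℂ} (hz : ‖z‖ = 1) (hw : 1 + conj x * z ≠ 0) :
    poissonK x (mobius x z) = ‖1 + conj x * z‖ ^ 2 / (1 - ‖x‖ ^ 2) := by
  have hsub : mobius x z - x = z * ((1 - ‖x‖ ^ 2 : ℝ) : ℂ) / (1 + conj x * z) := by
    rw [mobius, div_sub' hw]
    push_cast
    rw [← mul_conj']
    ring
  have hnorm : ‖mobius x z - x‖ ^ 2 = (1 - ‖x‖ ^ 2) ^ 2 / ‖1 + conj x * z‖ ^ 2 := by
    rw [hsub, norm_div, norm_mul, hz, one_mul, norm_real, div_pow, Real.norm_eq_abs, sq_abs]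
  have hw' : ‖1 + conj x * z‖ ≠ 0 := norm_ne_zero_iff.2 hw
  rw [poissonK, hnorm]
  by_cases hx : 1 - ‖x‖ ^ 2 = 0
  · simp [hx]
  · field_simp

theorem poissonK_circleExp_mobiusLift_mul {x : ℂ} (hx : ‖x‖ < 1) (t : ℝ) :
    poissonK x (circleExp (mobiusLift x t)) *
      ((1 - ‖x‖ ^ 2) / ‖1 + conj x * circleExp t‖ ^ 2) = 1 := by
  have hw := one_add_conj_mul_circleExp_ne_zero hx t
  have hA : 1 - ‖x‖ ^ 2 ≠ 0 := by nlinarith [norm_nonneg x]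
  have hw' : ‖1 + conj x * circleExp t‖ ≠ 0 := norm_ne_zero_iff.2 hw
  rw [circleExp_mobiusLift hx, poissonK_mobius (norm_circleExp t) hw]
  field_simp

/-- the pushforward of m under the Möbius map φ_x(z) = (z+x)/(1+conj(x)z)
is the measure with density the Poisson kernel P_x. -/
theorem mobius_pushforward_eq_poisson (x : ℂ) (hx : x ∈ unitDisc) :
    Measure.map (fun z : ℂ => (z + x) / (1 + (starRingEnd ℂ) x * z)) mCircle =
      mCircle.withDensity fun z => ENNReal.ofReal (poissonK x z) := by
  have hx' : ‖x‖ < 1 := hx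
  have hderiv_pos : ∀ t, 0 < (1 - ‖x‖ ^ 2) / ‖1 + conj x * circleExp t‖ ^ 2 := fun t =>
    div_pos (by nlinarith [norm_nonneg x])
      (pow_pos (norm_pos_iff.2 (one_add_conj_mul_circleExp_ne_zero hx' t)) 2)
  have hdensity : ∀ t, ENNReal.ofReal (poissonK x (circleExp (mobiusLift x t))) *
      ENNReal.ofReal ((1 - ‖x‖ ^ 2) / ‖1 + conj x * circleExp t‖ ^ 2) = 1 := fun t => by
    rw [← ENNReal.ofReal_mul' (hderiv_pos t).le, poissonK_circleExp_mobiusLift_mul hx',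
      ENNReal.ofReal_one]
  have hpoisson : Measurable fun z => ENNReal.ofReal (poissonK x z) := by
    unfold poissonK; fun_prop
  have hlift : mobius x ∘ circleExp = circleExp ∘ mobiusLift x :=
    funext fun t => (circleExp_mobiusLift hx' t).symm
  have h := map_comp_restrict_Ico_eq_withDensity one_pos (hasDerivAt_mobiusLift hx') hderiv_pos
    (mobiusLift_add_one x) measurable_circleExp circleExp_periodic hpoisson hdensity 0
  rw [zero_add] at h
  show Measure.map (mobius x) mCircle = _
  rw [mCircle_eq_map_circleExp, Measure.map_map (measurable_mobius x) measurable_circleExp, hlift,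
    h]
end
end

section
/- Let x, y ∈ D. Then for every z ∈ 𝕋, |P_x(z) − P_y(z)| ≤ 12·|x − y| / ((1 − |x|)²·(1 − |y|)²); in particular the supremum over z ∈ 𝕋 of |P_x(z) − P_y(z)| is bounded by the same quantity. -/
open MeasureTheory Filter Set

noncomputable section

/-!
For `|z| = 1` we have `1 - |x| ≤ |z - x| ≤ 2`. Writing
`P_x(z) - P_y(z) = (1 - |x|²)(|z - y|² - |z - x|²) / (|z - x|²|z - y|²) + (|y|² - |x|²) / |z - y|²`
and bounding each difference of squared norms by `(|u| + |v|)·|u - v| ≤ 4|x - y|` resp. `2|x - y|`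
gives the bound with constant `6`.
-/

theorem abs_sq_norm_sub_sq_norm_le {E : Type*} [SeminormedAddCommGroup E] (u v : E) :
    |‖u‖ ^ 2 - ‖v‖ ^ 2| ≤ (‖u‖ + ‖v‖) * ‖u - v‖ := by
  rw [show ‖u‖ ^ 2 - ‖v‖ ^ 2 = (‖u‖ + ‖v‖) * (‖u‖ - ‖v‖) by ring, abs_mul,
    abs_of_nonneg (by positivity)]
  gcongr
  exact abs_norm_sub_norm_le u v

theorem one_sub_norm_le_norm_sub {E : Type*} [SeminormedAddCommGroup E] {z : E} (hz : ‖z‖ = 1)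
    (x : E) : 1 - ‖x‖ ≤ ‖z - x‖ := by
  simpa [hz] using norm_sub_norm_le z x

theorem norm_sub_le_two {E : Type*} [SeminormedAddCommGroup E] {z x : E} (hz : ‖z‖ = 1)
    (hx : ‖x‖ ≤ 1) : ‖z - x‖ ≤ 2 := by
  linarith [norm_sub_le z x]

theorem poissonK_sub_poissonK {x y z : ℂ} (hzx : z ≠ x) (hzy : z ≠ y) :
    poissonK x z - poissonK y z =
      (1 - ‖x‖ ^ 2) * (‖z - y‖ ^ 2 - ‖z - x‖ ^ 2) / (‖z - x‖ ^ 2 * ‖z - y‖ ^ 2) +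
        (‖y‖ ^ 2 - ‖x‖ ^ 2) / ‖z - y‖ ^ 2 := by
  have hx : ‖z - x‖ ≠ 0 := norm_ne_zero_iff.2 (sub_ne_zero.2 hzx)
  have hy : ‖z - y‖ ≠ 0 := norm_ne_zero_iff.2 (sub_ne_zero.2 hzy)
  unfold poissonK
  field_simp
  ring

theorem abs_poissonK_sub_poissonK_le {x y z : ℂ} (hx : ‖x‖ < 1) (hy : ‖y‖ < 1) (hz : ‖z‖ = 1) :
    |poissonK x z - poissonK y z| ≤ 6 * ‖x - y‖ / ((1 - ‖x‖) ^ 2 * (1 - ‖y‖) ^ 2) := by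
  have ha := one_sub_norm_le_norm_sub hz x
  have hb := one_sub_norm_le_norm_sub hz y
  have hsq : |‖z - y‖ ^ 2 - ‖z - x‖ ^ 2| ≤ 4 * ‖x - y‖ := by
    have h := abs_sq_norm_sub_sq_norm_le (z - y) (z - x)
    rw [sub_sub_sub_cancel_left] at h
    nlinarith [norm_sub_le_two hz hx.le, norm_sub_le_two hz hy.le, norm_nonneg (x - y)]
  have hpq : |‖y‖ ^ 2 - ‖x‖ ^ 2| ≤ 2 * ‖x - y‖ := by
    have h := abs_sq_norm_sub_sq_norm_le y x
    rw [norm_sub_rev y x] at h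
    nlinarith [norm_nonneg (x - y)]
  have hca : 0 < 1 - ‖x‖ := by linarith
  have hcb : 0 < 1 - ‖y‖ := by linarith
  have hzx : z ≠ x := by rintro rfl; linarith
  have hzy : z ≠ y := by rintro rfl; linarith
  set c := (1 - ‖x‖) ^ 2 * (1 - ‖y‖) ^ 2
  have hc_mul : c ≤ ‖z - x‖ ^ 2 * ‖z - y‖ ^ 2 := by unfold c; gcongr
  have hc_right : c ≤ ‖z - y‖ ^ 2 := by
    unfold c
    calc _ ≤ 1 * ‖z - y‖ ^ 2 := by gcongr; exact pow_le_one₀ hca.le (by linarith [norm_nonneg x])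
      _ = _ := one_mul _
  rw [poissonK_sub_poissonK hzx hzy]
  calc _ ≤ |(1 - ‖x‖ ^ 2) * (‖z - y‖ ^ 2 - ‖z - x‖ ^ 2) / (‖z - x‖ ^ 2 * ‖z - y‖ ^ 2)| +
        |(‖y‖ ^ 2 - ‖x‖ ^ 2) / ‖z - y‖ ^ 2| := abs_add_le _ _
    _ ≤ 4 * ‖x - y‖ / c + 2 * ‖x - y‖ / c := by
      rw [abs_div, abs_div, abs_mul, abs_of_nonneg (by positivity : (0 : ℝ) ≤ _ * _),
        abs_of_nonneg (by positivity : (0 : ℝ) ≤ ‖z - y‖ ^ 2)]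
      have hp : |1 - ‖x‖ ^ 2| ≤ 1 := by
        rw [abs_le]; constructor <;> nlinarith [norm_nonneg x]
      have hc : 0 < c := by positivity
      gcongr ?_ + ?_
      · refine div_le_div₀ (by positivity) ?_ hc hc_mul
        simpa using mul_le_mul hp hsq (abs_nonneg _) zero_le_one
      · exact div_le_div₀ (by positivity) hpq hc hc_right
    _ = 6 * ‖x - y‖ / c := by ring

/-- Lipschitz-type bound for Poisson kernels. -/
theorem poisson_diff_bound (x y : ℂ) (hx : x ∈ unitDisc) (hy : y ∈ unitDisc) :
    (∀ z ∈ unitCircle,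
      |poissonK x z - poissonK y z| ≤
        12 * ‖x - y‖ / ((1 - ‖x‖) ^ 2 * (1 - ‖y‖) ^ 2)) ∧
    (⨆ z : unitCircle, |poissonK x (z : ℂ) - poissonK y (z : ℂ)|) ≤
      12 * ‖x - y‖ / ((1 - ‖x‖) ^ 2 * (1 - ‖y‖) ^ 2) := by
  have bound : ∀ z ∈ unitCircle, |poissonK x z - poissonK y z| ≤
      12 * ‖x - y‖ / ((1 - ‖x‖) ^ 2 * (1 - ‖y‖) ^ 2) := fun z hz =>
    (abs_poissonK_sub_poissonK_le hx hy hz).trans (by gcongr; norm_num)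
  exact ⟨bound, Real.iSup_le (fun z => bound z z.2) (by positivity)⟩
end
end

section
/- Let n ≥ 1, let T_1, …, T_n be finite Blaschke products, and let f : 𝕋 → ℂ be continuous. For θ ∈ 𝕋 write θT_k for the Blaschke product z ↦ θ·T_k(z) and let F_θ = (θT_n) ∘ ⋯ ∘ (θT_1). Then ∫_𝕋 ∫_𝕋 f(F_θ(z)) dm(z) dm(θ) = ∫_𝕋 f dm. -/
open MeasureTheory Filter Set

noncomputable section

/-- Composition G_{n-1} ∘ ⋯ ∘ G_0 of a finite family of self-maps of ℂ. -/
def compFam (n : ℕ) (G : Fin n → ℂ → ℂ) (z : ℂ) : ℂ :=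
  (List.ofFn G).foldl (fun w g => g w) z


/-!
Fubini reduces the claim to the θ-integral for a fixed z ∈ 𝕋. The map h : θ ↦ F_θ(z) is
holomorphic near the closed disc, maps 𝕋 into 𝕋, and h(0) = 0 because the outermost factor
is then 0 · T_n. Such a map pushes m forward to m (Löwner's lemma): on 𝕋,
h^j · conj(h)^k = h^(j-k) for j ≥ k, so by the mean value property the moments ∫ zʲ z̄ᵏ of h_*m
are δ_{jk}, as are those of m; and a finite measure carried by a compact subset K of ℂ is
determined by its moments, since by Stone–Weierstrass the polynomials in z and z̄ are dense
in C(K).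
-/

open ComplexConjugate BoundedContinuousFunction Metric Real

theorem MeasureTheory.Measure.ext_of_moments {K : Set ℂ} (hK : IsCompact K) {μ ν : Measure ℂ}
    [IsFiniteMeasure μ] [IsFiniteMeasure ν] (hμ : ∀ᵐ z ∂μ, z ∈ K) (hν : ∀ᵐ z ∂ν, z ∈ K)
    (h : ∀ j k : ℕ, ∫ z, z ^ j * conj z ^ k ∂μ = ∫ z, z ^ j * conj z ^ k ∂ν) : μ = ν := by
  have hKm : MeasurableSet K := hK.isClosed.measurableSet
  have : PolishSpace K := hK.isClosed.polishSpace
  have : CompactSpace K := isCompact_iff_compactSpace.1 hK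
  suffices μ.comap Subtype.val = ν.comap Subtype.val by
    rw [← Measure.restrict_eq_self_of_ae_mem hμ, ← Measure.restrict_eq_self_of_ae_mem hν,
      ← map_comap_subtype_coe hKm, ← map_comap_subtype_coe hKm, this]
  let X : K →ᵇ ℂ := mkOfCompact ⟨Subtype.val, continuous_subtype_val⟩
  have integral_monomial (ρ : Measure ℂ) (hρ : ∀ᵐ z ∂ρ, z ∈ K) (j k : ℕ) :
      ∫ x : K, (X ^ j * star X ^ k) x ∂ρ.comap Subtype.val = ∫ z, z ^ j * conj z ^ k ∂ρ :=
    (integral_subtype_comap hKm fun z : ℂ => z ^ j * conj z ^ k).trans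
      (by rw [Measure.restrict_eq_self_of_ae_mem hρ])
  refine ext_of_forall_mem_subalgebra_integral_eq_of_polish (A := StarAlgebra.adjoin ℂ {X}) ?_ ?_
  · intro x y hxy
    exact ⟨_, ⟨_, ⟨X, StarAlgebra.subset_adjoin ℂ {X} rfl, rfl⟩, rfl⟩, Subtype.coe_injective.ne hxy⟩
  · intro g hg
    replace hg : g ∈ Submodule.span ℂ (Submonoid.closure {X, star X} : Set (K →ᵇ ℂ)) := by
      rwa [← Set.singleton_union, ← Set.star_singleton, ← StarAlgebra.adjoin_eq_span]
    induction hg using Submodule.span_induction with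
    | mem g hg =>
      obtain ⟨j, k, rfl⟩ := (Submonoid.mem_closure_pair _ _ _).1 hg
      rw [integral_monomial μ hμ, integral_monomial ν hν, h]
    | zero => simp
    | add g g' _ _ h h' =>
      simp only [BoundedContinuousFunction.coe_add, Pi.add_apply]
      rw [integral_add (g.integrable _) (g'.integrable _),
        integral_add (g.integrable _) (g'.integrable _), h, h']
    | smul c g _ h =>
      simp only [BoundedContinuousFunction.coe_smul]
      rw [integral_smul, integral_smul, h]

theorem ContinuousOn.integrable_of_ae_mem {α E : Type*} [TopologicalSpace α] [T2Space α]
    [MeasurableSpace α] [OpensMeasurableSpace α] [NormedAddCommGroup E] {μ : Measure α}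
    [IsFiniteMeasure μ] {K : Set α} {g : α → E} (hg : ContinuousOn g K) (hK : IsCompact K)
    (hμ : ∀ᵐ x ∂μ, x ∈ K) : Integrable g μ := by
  rw [← Measure.restrict_eq_self_of_ae_mem hμ]
  exact hg.integrableOn_compact hK

section Blaschke

def blaschkeFactor (a w : ℂ) : ℂ := (w - a) / (1 - conj a * w)

theorem Complex.normSq_one_sub_conj_mul (a w : ℂ) :
    normSq (1 - conj a * w) = normSq (w - a) + (1 - normSq a) * (1 - normSq w) := by
  simp only [normSq_apply, sub_re, sub_im, mul_re, mul_im, one_re, one_im, conj_re, conj_im]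
  ring

variable {a w : ℂ}

theorem one_sub_conj_mul_ne_zero (ha : ‖a‖ < 1) (hw : ‖w‖ ≤ 1) : 1 - conj a * w ≠ 0 := by
  refine sub_ne_zero.2 (ne_of_apply_ne norm ?_)
  rw [norm_one, norm_mul, Complex.norm_conj]
  exact (mul_lt_one_of_nonneg_of_lt_one_left (norm_nonneg a) ha hw).ne'

theorem differentiableAt_blaschkeFactor (ha : ‖a‖ < 1) (hw : ‖w‖ ≤ 1) :
    DifferentiableAt ℂ (blaschkeFactor a) w :=
  (differentiableAt_id.sub_const a).div ((differentiableAt_const 1).sub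
    (differentiableAt_id.const_mul _)) (one_sub_conj_mul_ne_zero ha hw)

theorem norm_blaschkeFactor_le_one (ha : ‖a‖ ≤ 1) (hw : ‖w‖ ≤ 1) :
    ‖blaschkeFactor a w‖ ≤ 1 := by
  rw [blaschkeFactor, norm_div]
  refine div_le_one_of_le₀ ?_ (norm_nonneg _)
  rw [← sq_le_sq₀ (norm_nonneg _) (norm_nonneg _), ← Complex.normSq_eq_norm_sq,
    ← Complex.normSq_eq_norm_sq, Complex.normSq_one_sub_conj_mul]
  have hsq {x : ℂ} (hx : ‖x‖ ≤ 1) : 0 ≤ 1 - Complex.normSq x := by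
    rw [sub_nonneg, Complex.normSq_eq_norm_sq]
    exact pow_le_one₀ (norm_nonneg x) hx
  exact le_add_of_nonneg_right (mul_nonneg (hsq ha) (hsq hw))

theorem norm_blaschkeFactor_eq_one (ha : ‖a‖ < 1) (hw : ‖w‖ = 1) :
    ‖blaschkeFactor a w‖ = 1 := by
  rw [blaschkeFactor, norm_div, div_eq_one_iff_eq (norm_ne_zero_iff.2
    (one_sub_conj_mul_ne_zero ha hw.le))]
  rw [← sq_eq_sq₀ (norm_nonneg _) (norm_nonneg _), ← Complex.normSq_eq_norm_sq,
    ← Complex.normSq_eq_norm_sq, Complex.normSq_one_sub_conj_mul, Complex.normSq_eq_norm_sq w,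
    hw]
  ring

end Blaschke

namespace IsBlaschke

variable {d : ℕ} {T : ℂ → ℂ} {w : ℂ}

theorem differentiableAt (hT : IsBlaschke d T) (hw : ‖w‖ ≤ 1) : DifferentiableAt ℂ T w := by
  obtain ⟨-, θ₀, a, -, ha, hT⟩ := hT
  rw [funext hT]
  exact (DifferentiableAt.fun_finsetProd fun i _ =>
    differentiableAt_blaschkeFactor (ha i) hw).const_mul θ₀

theorem norm_le_one (hT : IsBlaschke d T) (hw : ‖w‖ ≤ 1) : ‖T w‖ ≤ 1 := by
  obtain ⟨-, θ₀, a, hθ₀, ha, hT⟩ := hT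
  rw [hT, norm_mul, hθ₀, one_mul, norm_prod]
  exact Finset.prod_le_one (fun _ _ => norm_nonneg _) fun i _ =>
    norm_blaschkeFactor_le_one (ha i).le hw

theorem norm_eq_one (hT : IsBlaschke d T) (hw : ‖w‖ = 1) : ‖T w‖ = 1 := by
  obtain ⟨-, θ₀, a, hθ₀, ha, hT⟩ := hT
  rw [hT, norm_mul, hθ₀, one_mul, norm_prod]
  exact Finset.prod_eq_one fun i _ => norm_blaschkeFactor_eq_one (ha i) hw

end IsBlaschke

section compFam

variable {n : ℕ}

theorem compFam_succ (G : Fin (n + 1) → ℂ → ℂ) (z : ℂ) :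
    compFam (n + 1) G z = G (Fin.last n) (compFam n (fun k => G k.castSucc) z) := by
  rw [compFam, compFam, List.ofFn_succ', List.concat_eq_append, List.foldl_append]
  rfl

theorem compFam_const (hn : n ≠ 0) (c z : ℂ) : compFam n (fun _ _ => c) z = c := by
  obtain ⟨m, rfl⟩ := Nat.exists_eq_succ_of_ne_zero hn
  exact compFam_succ _ z

theorem mapsTo_compFam {G : Fin n → ℂ → ℂ} {s : Set ℂ} (hG : ∀ k, MapsTo (G k) s s) :
    MapsTo (compFam n G) s s := by
  induction n with
  | zero => exact mapsTo_id s
  | succ m ih =>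
    intro z hz
    rw [compFam_succ]
    exact hG _ (ih (fun k => hG _) hz)

theorem differentiableAt_compFam {E : Type*} [NormedAddCommGroup E] [NormedSpace ℂ E]
    {G : Fin n → E → ℂ → ℂ} {S : Set E} {t : Set ℂ}
    (hd : ∀ k, ∀ p ∈ S, ∀ w ∈ t, DifferentiableAt ℂ (fun q : E × ℂ => G k q.1 q.2) (p, w))
    (hm : ∀ k, ∀ p ∈ S, MapsTo (G k p) t t) {p : E} {z : ℂ} (hp : p ∈ S) (hz : z ∈ t) :
    DifferentiableAt ℂ (fun q : E × ℂ => compFam n (fun k => G k q.1) q.2) (p, z) := by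
  induction n with
  | zero => exact differentiableAt_snd
  | succ m ih =>
    simp only [compFam_succ]
    have hlast := hd (Fin.last m) p hp _ (mapsTo_compFam (fun k => hm k.castSucc p hp) hz)
    exact hlast.comp (p, z) (differentiableAt_fst.prodMk
      (ih (fun k => hd k.castSucc) (fun k => hm k.castSucc)))

end compFam

section mCircle

theorem unitCircle_eq_sphere : unitCircle = sphere (0 : ℂ) 1 := by
  ext z
  simp [unitCircle]

theorem isCompact_unitCircle : IsCompact unitCircle :=
  unitCircle_eq_sphere ▸ isCompact_sphere 0 1

theorem mCircle_eq_map_circleMap :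
    mCircle = (volume.restrict (Ico (0 : ℝ) 1)).map fun t => circleMap 0 1 (2 * π * t) := by
  simp only [mCircle, circleMap_zero, Complex.ofReal_one, one_mul]
  congr with t
  push_cast
  ring_nf

theorem aemeasurable_circleMap_two_pi_mul :
    AEMeasurable (fun t : ℝ => circleMap 0 1 (2 * π * t)) (volume.restrict (Ico 0 1)) :=
  ((continuous_circleMap 0 1).comp (continuous_const_mul _)).aemeasurable

instance : IsProbabilityMeasure mCircle := by
  have : IsProbabilityMeasure (volume.restrict (Ico (0 : ℝ) 1)) := ⟨by simp⟩
  rw [mCircle_eq_map_circleMap]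
  exact Measure.isProbabilityMeasure_map aemeasurable_circleMap_two_pi_mul

theorem ae_mem_unitCircle_mCircle : ∀ᵐ z ∂mCircle, z ∈ unitCircle := by
  rw [mCircle_eq_map_circleMap, unitCircle_eq_sphere]
  exact (ae_map_iff aemeasurable_circleMap_two_pi_mul isClosed_sphere.measurableSet).2
    (ae_of_all _ fun t => circleMap_mem_sphere 0 zero_le_one _)

theorem ae_mem_unitCircle_prod_mCircle :
    ∀ᵐ q ∂mCircle.prod mCircle, q ∈ unitCircle ×ˢ unitCircle := by
  filter_upwards [Measure.quasiMeasurePreserving_fst.ae ae_mem_unitCircle_mCircle,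
    Measure.quasiMeasurePreserving_snd.ae ae_mem_unitCircle_mCircle] with _ h1 h2 using ⟨h1, h2⟩

theorem ContinuousOn.integrable_mCircle {E : Type*} [NormedAddCommGroup E] {g : ℂ → E}
    (hg : ContinuousOn g unitCircle) : Integrable g mCircle :=
  hg.integrable_of_ae_mem isCompact_unitCircle ae_mem_unitCircle_mCircle

theorem integral_mCircle_eq_circleAverage {E : Type*} [NormedAddCommGroup E] [NormedSpace ℝ E]
    {F : ℂ → E} (hF : AEStronglyMeasurable F mCircle) :
    ∫ z, F z ∂mCircle = circleAverage F 0 1 := by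
  rw [mCircle_eq_map_circleMap] at hF ⊢
  rw [integral_map aemeasurable_circleMap_two_pi_mul hF, integral_Ico_eq_integral_Ioo,
    ← integral_Ioc_eq_integral_Ioo, ← intervalIntegral.integral_of_le zero_le_one,
    intervalIntegral.integral_comp_mul_left (fun s => F (circleMap 0 1 s)) (by positivity),
    circleAverage_def, mul_zero, mul_one]

theorem DiffContOnCl.continuousOn_unitCircle {E : Type*} [NormedAddCommGroup E]
    [NormedSpace ℂ E] {g : ℂ → E} (hg : DiffContOnCl ℂ g (ball 0 1)) :
    ContinuousOn g unitCircle := by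
  refine hg.continuousOn.mono ?_
  rw [closure_ball 0 one_ne_zero, unitCircle_eq_sphere]
  exact sphere_subset_closedBall

theorem DiffContOnCl.integral_mCircle {E : Type*} [NormedAddCommGroup E] [NormedSpace ℂ E]
    [CompleteSpace E] {g : ℂ → E} (hg : DiffContOnCl ℂ g (ball 0 1)) :
    ∫ z, g z ∂mCircle = g 0 := by
  rw [integral_mCircle_eq_circleAverage
    hg.continuousOn_unitCircle.integrable_mCircle.aestronglyMeasurable]
  exact DiffContOnCl.circleAverage (by rwa [abs_one])

end mCircle

section InnerFunction

variable {h : ℂ → ℂ}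

theorem integral_mCircle_pow_mul_conj_pow_of_le (hd : DiffContOnCl ℂ h (ball 0 1))
    (h0 : h 0 = 0) (hm : MapsTo h unitCircle unitCircle) {j k : ℕ} (hkj : k ≤ j) :
    ∫ z, h z ^ j * conj (h z) ^ k ∂mCircle = 0 ^ (j - k) := by
  obtain ⟨d, rfl⟩ := Nat.exists_eq_add_of_le hkj
  calc ∫ z, h z ^ (k + d) * conj (h z) ^ k ∂mCircle = ∫ z, h z ^ d ∂mCircle := by
        refine integral_congr_ae (ae_mem_unitCircle_mCircle.mono fun z hz => ?_)
        have hunit : h z * conj (h z) = 1 := by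
          rw [Complex.mul_conj, Complex.normSq_eq_norm_sq, hm hz, one_pow, Complex.ofReal_one]
        dsimp only
        rw [pow_add, mul_right_comm, ← mul_pow, hunit, one_pow, one_mul]
    _ = h 0 ^ d := ((differentiable_pow d).comp_diffContOnCl hd).integral_mCircle
    _ = 0 ^ (k + d - k) := by rw [h0, Nat.add_sub_cancel_left]

theorem integral_mCircle_pow_mul_conj_pow (hd : DiffContOnCl ℂ h (ball 0 1)) (h0 : h 0 = 0)
    (hm : MapsTo h unitCircle unitCircle) (j k : ℕ) :
    ∫ z, h z ^ j * conj (h z) ^ k ∂mCircle = if j = k then 1 else 0 := by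
  rcases le_total k j with hkj | hjk
  · rw [integral_mCircle_pow_mul_conj_pow_of_le hd h0 hm hkj, zero_pow_eq]
    exact if_congr (by omega) rfl rfl
  · have hswap : ∀ z, h z ^ j * conj (h z) ^ k = conj (h z ^ k * conj (h z) ^ j) := fun z => by
      rw [map_mul, map_pow, map_pow, Complex.conj_conj, mul_comm]
    simp_rw [hswap, integral_conj, integral_mCircle_pow_mul_conj_pow_of_le hd h0 hm hjk,
      map_pow, map_zero, zero_pow_eq]
    exact if_congr (by omega) rfl rfl

theorem map_mCircle_of_diffContOnCl (hd : DiffContOnCl ℂ h (ball 0 1)) (h0 : h 0 = 0)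
    (hm : MapsTo h unitCircle unitCircle) : mCircle.map h = mCircle := by
  have hmeas : AEMeasurable h mCircle := hd.continuousOn_unitCircle.integrable_mCircle.aemeasurable
  refine Measure.ext_of_moments isCompact_unitCircle ?_ ae_mem_unitCircle_mCircle fun j k => ?_
  · exact (ae_map_iff hmeas isCompact_unitCircle.isClosed.measurableSet).2
      (ae_mem_unitCircle_mCircle.mono fun z hz => hm hz)
  · have hmono : Continuous fun z : ℂ => z ^ j * conj z ^ k := by fun_prop
    rw [integral_map hmeas hmono.aestronglyMeasurable, integral_mCircle_pow_mul_conj_pow hd h0 hm]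
    exact (integral_mCircle_pow_mul_conj_pow (h := id) differentiable_id.diffContOnCl rfl
      (mapsTo_id _) j k).symm

theorem integral_mCircle_comp_of_diffContOnCl {f : ℂ → ℂ} (hf : ContinuousOn f unitCircle)
    (hd : DiffContOnCl ℂ h (ball 0 1)) (h0 : h 0 = 0) (hm : MapsTo h unitCircle unitCircle) :
    ∫ z, f (h z) ∂mCircle = ∫ z, f z ∂mCircle := by
  have hmeas : AEMeasurable h mCircle := hd.continuousOn_unitCircle.integrable_mCircle.aemeasurable
  have hmap := map_mCircle_of_diffContOnCl hd h0 hm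
  rw [← integral_map hmeas (by rw [hmap]; exact hf.integrable_mCircle.aestronglyMeasurable), hmap]

end InnerFunction

section RotatedComposition

variable {n : ℕ} {T : Fin n → ℂ → ℂ} {deg : Fin n → ℕ}

theorem differentiableAt_compFam_mul_blaschke (hB : ∀ k, IsBlaschke (deg k) (T k)) {θ z : ℂ}
    (hθ : ‖θ‖ ≤ 1) (hz : ‖z‖ ≤ 1) :
    DifferentiableAt ℂ (fun q : ℂ × ℂ => compFam n (fun k w => q.1 * T k w) q.2) (θ, z) := by
  refine differentiableAt_compFam (G := fun k θ w => θ * T k w) (S := closedBall 0 1)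
    (fun k θ _ w hw => ?_) (fun k θ hθ w hw => ?_) (mem_closedBall_zero_iff.2 hθ)
    (mem_closedBall_zero_iff.2 hz)
  · rw [mem_closedBall_zero_iff] at hw
    exact differentiableAt_fst.mul (((hB k).differentiableAt hw).comp _ differentiableAt_snd)
  · rw [mem_closedBall_zero_iff] at hθ hw ⊢
    rw [norm_mul]
    exact mul_le_one₀ hθ (norm_nonneg _) ((hB k).norm_le_one hw)

theorem mapsTo_compFam_mul_blaschke (hB : ∀ k, IsBlaschke (deg k) (T k)) {θ : ℂ}
    (hθ : θ ∈ unitCircle) : MapsTo (compFam n fun k w => θ * T k w) unitCircle unitCircle :=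
  mapsTo_compFam fun k w hw => by
    simp only [unitCircle, mem_ofPred_eq, norm_mul] at hθ hw ⊢
    rw [hθ, (hB k).norm_eq_one hw, one_mul]

theorem continuousOn_compFam_mul_blaschke (hB : ∀ k, IsBlaschke (deg k) (T k)) :
    ContinuousOn (fun q : ℂ × ℂ => compFam n (fun k w => q.1 * T k w) q.2)
      (unitCircle ×ˢ unitCircle) := fun _ hq =>
  (differentiableAt_compFam_mul_blaschke hB (le_of_eq hq.1)
    (le_of_eq hq.2)).continuousAt.continuousWithinAt

theorem diffContOnCl_compFam_mul_blaschke (hB : ∀ k, IsBlaschke (deg k) (T k)) {z : ℂ}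
    (hz : ‖z‖ ≤ 1) : DiffContOnCl ℂ (fun θ => compFam n (fun k w => θ * T k w) z) (ball 0 1) := by
  refine DifferentiableOn.diffContOnCl fun θ hθ => ?_
  rw [closure_ball 0 one_ne_zero, mem_closedBall_zero_iff] at hθ
  exact ((differentiableAt_compFam_mul_blaschke hB hθ hz).comp (f := fun θ => (θ, z)) θ
    (differentiableAt_id.prodMk (differentiableAt_const z))).differentiableWithinAt

end RotatedComposition

/-- averaging a rotated composition of Blaschke products over θ ∈ 𝕋
recovers the Lebesgue integral. -/
theorem average_rotated_composition (n : ℕ) (hn : 1 ≤ n)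
    (T : Fin n → ℂ → ℂ) (deg : Fin n → ℕ) (hB : ∀ k, IsBlaschke (deg k) (T k))
    (f : ℂ → ℂ) (hf : ContinuousOn f unitCircle) :
    ∫ θ, (∫ z, f (compFam n (fun k w => θ * T k w) z) ∂mCircle) ∂mCircle =
      ∫ z, f z ∂mCircle := by
  have hint : Integrable (Function.uncurry fun θ z => f (compFam n (fun k w => θ * T k w) z))
      (mCircle.prod mCircle) :=
    (hf.comp (continuousOn_compFam_mul_blaschke hB) fun q hq =>
      mapsTo_compFam_mul_blaschke hB hq.1 hq.2).integrable_of_ae_mem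
      (isCompact_unitCircle.prod isCompact_unitCircle) ae_mem_unitCircle_prod_mCircle
  have hinner : ∀ z ∈ unitCircle,
      ∫ θ, f (compFam n (fun k w => θ * T k w) z) ∂mCircle = ∫ z, f z ∂mCircle := fun z hz =>
    integral_mCircle_comp_of_diffContOnCl hf (diffContOnCl_compFam_mul_blaschke hB (le_of_eq hz))
      (by simpa using compFam_const (by omega) 0 z) fun θ hθ => mapsTo_compFam_mul_blaschke hB hθ hz
  rw [integral_integral_swap hint, integral_congr_ae (ae_mem_unitCircle_mCircle.mono hinner),
    integral_const, probReal_univ, one_smul]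
end
end
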